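/- Let A be a real m×n matrix and B be a real m×p matrix whose column spaces are orthogonal, i.e., AᵀB = 0 (equivalently, every column of A is orthogonal to every column of B). Then the nuclear norm of the column-wise concatenation [A,B] equals the sum of the nuclear norms: ‖[A,B]‖_* = ‖A‖_* + ‖B‖_*. -/

import Mathlib

/-!
Orthogonality of the column spaces makes the Gram matrix of `[A, B]` block diagonal,
`[A, B]ᴴ [A, B] = diag(AᴴA, BᴴB)`, so its eigenvalues, counted with multiplicity as the
roots of its characteristic polynomial, are those of `AᴴA` together with those of `BᴴB`.
-/

open Matrix

/-- The nuclear norm of a real matrix: the sum of its singular values,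
i.e. the square roots of the eigenvalues of `Mᴴ * M`. -/
noncomputable def nuclearNorm {m n : Type*} [Fintype m] [Fintype n] [DecidableEq n]
    (M : Matrix m n ℝ) : ℝ :=
  ∑ i, Real.sqrt ((Matrix.isHermitian_conjTranspose_mul_self M).eigenvalues i)

namespace Matrix

variable {k : Type*} [Fintype k] [DecidableEq k]

theorem IsHermitian.sum_eigenvalues_comp_eq_sum_map_roots_charpoly {N : Matrix k k ℝ}
    (hN : N.IsHermitian) (f : ℝ → ℝ) :
    ∑ i, f (hN.eigenvalues i) = (N.charpoly.roots.map f).sum := by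
  rw [hN.roots_charpoly_eq_eigenvalues, Multiset.map_map]
  rfl

theorem roots_charpoly_fromBlocks_zero₁₂ {R : Type*} [CommRing R] [IsDomain R]
    {l : Type*} [Fintype l] [DecidableEq l] (A : Matrix k k R) (C : Matrix l k R)
    (D : Matrix l l R) :
    (fromBlocks A 0 C D).charpoly.roots = A.charpoly.roots + D.charpoly.roots := by
  rw [charpoly_fromBlocks_zero₁₂,
    Polynomial.roots_mul (mul_ne_zero (charpoly_monic A).ne_zero (charpoly_monic D).ne_zero)]

theorem conjTranspose_fromCols_mul_fromCols_of_orthogonal {R : Type*} [Ring R]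
    [StarRing R] {m n₁ n₂ : Type*} [Fintype m] (A : Matrix m n₁ R) (B : Matrix m n₂ R)
    (h : Aᴴ * B = 0) :
    (fromCols A B)ᴴ * fromCols A B = fromBlocks (Aᴴ * A) 0 0 (Bᴴ * B) := by
  have h' : Bᴴ * A = 0 := by
    rw [← conjTranspose_conjTranspose A, ← conjTranspose_mul, h, conjTranspose_zero]
  rw [conjTranspose_fromCols_eq_fromRows_conjTranspose, fromRows_mul_fromCols, h, h']

end Matrix

theorem nuclearNorm_eq_sum_map_roots_charpoly {m n : Type*} [Fintype m] [Fintype n]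
    [DecidableEq n] (M : Matrix m n ℝ) :
    nuclearNorm M = ((Mᴴ * M).charpoly.roots.map Real.sqrt).sum :=
  (isHermitian_conjTranspose_mul_self M).sum_eigenvalues_comp_eq_sum_map_roots_charpoly _

/-- If the column spaces of `A` and `B` are orthogonal (`Aᵀ * B = 0`), then the
nuclear norm of the column-wise concatenation `[A, B]` equals the sum of the
nuclear norms of `A` and `B`. -/
theorem nuclearNorm_fromColumns_eq_of_orthogonal {m n p : ℕ}
    (A : Matrix (Fin m) (Fin n) ℝ) (B : Matrix (Fin m) (Fin p) ℝ)
    (h : Aᵀ * B = 0) :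
    nuclearNorm (Matrix.fromCols A B) = nuclearNorm A + nuclearNorm B := by
  rw [← conjTranspose_eq_transpose_of_trivial] at h
  rw [nuclearNorm_eq_sum_map_roots_charpoly, nuclearNorm_eq_sum_map_roots_charpoly,
    nuclearNorm_eq_sum_map_roots_charpoly, conjTranspose_fromCols_mul_fromCols_of_orthogonal A B h,
    roots_charpoly_fromBlocks_zero₁₂, Multiset.map_add, Multiset.sum_add]
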